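/- For every natural number n ≥ 1 and every x ∈ ℝ^n, the function f(x) = max(0, x_1, …, x_n) fails to be locally affine at x (that is, there is no open neighborhood U of x and no affine map g : ℝ^n → ℝ with f = g on U) if and only if at least two indices j ∈ {0,1,…,n} satisfy x_j = f(x) (where x_0 := 0). Equivalently, the set of points at which f is not locally affine is exactly the support |L^n_{n−1}|. -/

import Mathlib

/-! Where a single coordinate `x_j` (with `x_0 = 0`) attains the maximum, `f` agrees near `x` with
the linear form `y ↦ y_j`. Conversely, if `f = g` near `x` with `g` affine, each coordinate form
attaining the maximum at `x` lies below `g` near `x` and touches it at `x`, so it has the same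
linear part as `g`; distinct coordinate forms are different, so the maximum is attained only once.
Finally `σ_I` is the set where every index outside `I` attains the maximum, which identifies
`|L^n_k|` with the set of points where at least `n + 1 - k` indices do. -/

open Finset

/-- The generator `-e_i` of the fan, for `i ∈ {0,1,…,n}`:
for `i = 0` it is `-e_0 = e_1 + ⋯ + e_n`, and for `i ≥ 1` it is `-e_i`. -/
def negE (n : ℕ) (i : Fin (n + 1)) : Fin n → ℝ :=
  fun j => if (i : ℕ) = 0 then 1 else if (j : ℕ) + 1 = (i : ℕ) then -1 else 0

/-- The cone `σ_I`: all nonnegative combinations of the vectors `-e_i`, `i ∈ I`. -/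
def sigmaCone (n : ℕ) (I : Finset (Fin (n + 1))) : Set (Fin n → ℝ) :=
  { x | ∃ lam : Fin (n + 1) → ℝ, (∀ i, 0 ≤ lam i) ∧ x = ∑ i ∈ I, lam i • negE n i }

/-- The relative interior of `σ_I`: combinations with strictly positive coefficients. -/
def relintCone (n : ℕ) (I : Finset (Fin (n + 1))) : Set (Fin n → ℝ) :=
  { x | ∃ lam : Fin (n + 1) → ℝ, (∀ i ∈ I, 0 < lam i) ∧ x = ∑ i ∈ I, lam i • negE n i }

/-- The support `|L^n_k|`: the union of the cones `σ_I` over proper subsets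
`I ⊊ {0,1,…,n}` with `|I| ≤ k`. -/
def suppL (n k : ℕ) : Set (Fin n → ℝ) :=
  ⋃ I ∈ { I : Finset (Fin (n + 1)) | I ≠ Finset.univ ∧ I.card ≤ k }, sigmaCone n I

/-- The `j`-th extended coordinate of `x`, for `j ∈ {0,1,…,n}`, with `x_0 := 0`. -/
def coordX {n : ℕ} (x : Fin n → ℝ) (j : Fin (n + 1)) : ℝ :=
  if h : (j : ℕ) = 0 then 0 else x ⟨(j : ℕ) - 1, by have := j.isLt; omega⟩

/-- The tropical polynomial `f(x) = max(0, x_1, …, x_n)`. -/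
def tropF {n : ℕ} (x : Fin n → ℝ) : ℝ :=
  (Finset.univ : Finset (Fin (n + 1))).sup' Finset.univ_nonempty (coordX x)

open Filter Topology

section Coordinates

variable {n : ℕ}

@[simp]
lemma coordX_zero (x : Fin n → ℝ) : coordX x 0 = 0 := by simp [coordX]

@[simp]
lemma coordX_succ (x : Fin n → ℝ) (m : Fin n) : coordX x m.succ = x m := by
  simp [coordX]

lemma eq_of_forall_coordX_eq {x y : Fin n → ℝ} (h : ∀ j, coordX x j = coordX y j) : x = y :=
  funext fun m => by simpa using h m.succ

lemma coordX_le_tropF (x : Fin n → ℝ) (j : Fin (n + 1)) : coordX x j ≤ tropF x :=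
  le_sup' _ (mem_univ j)

lemma exists_coordX_eq_tropF (x : Fin n → ℝ) : ∃ j, coordX x j = tropF x := by
  obtain ⟨j, -, hj⟩ := exists_mem_eq_sup' univ_nonempty (coordX x)
  exact ⟨j, hj.symm⟩

lemma tropF_eq_of_forall_le {x : Fin n → ℝ} {c : ℝ} (hle : ∀ j, coordX x j ≤ c)
    (heq : ∃ j, coordX x j = c) : tropF x = c := by
  obtain ⟨j, rfl⟩ := heq
  exact le_antisymm (sup'_le _ _ fun i _ => hle i) (coordX_le_tropF x j)

variable (n) in
def coordLin (j : Fin (n + 1)) : (Fin n → ℝ) →ₗ[ℝ] ℝ where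
  toFun x := coordX x j
  map_add' x y := by unfold coordX; split_ifs <;> simp
  map_smul' t x := by unfold coordX; split_ifs <;> simp

@[simp]
lemma coordLin_apply (j : Fin (n + 1)) (x : Fin n → ℝ) : coordLin n j x = coordX x j := rfl

lemma coordX_negE (i j : Fin (n + 1)) :
    coordX (negE n i) j = (if i = 0 then 1 else 0) - (if i = j then 1 else 0) := by
  rcases Fin.eq_zero_or_eq_succ j with rfl | ⟨m, rfl⟩
  · split_ifs <;> simp_all
  · rcases Fin.eq_zero_or_eq_succ i with rfl | ⟨l, rfl⟩
    · simp [negE, (Fin.succ_ne_zero m).symm]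
    · simp only [coordX_succ, negE, Fin.succ_ne_zero, Fin.succ_inj, Fin.val_succ]
      split_ifs <;> simp_all [Fin.val_inj, eq_comm]

lemma coordLin_injective : Function.Injective (coordLin n) := by
  intro j k h
  simpa [coordX_negE] using LinearMap.congr_fun h (negE n j)

end Coordinates

section Cones

variable {n : ℕ}

lemma coordX_sum_smul_negE (s : Finset (Fin (n + 1))) (lam : Fin (n + 1) → ℝ) (j : Fin (n + 1)) :
    coordX (∑ i ∈ s, lam i • negE n i) j
      = (if 0 ∈ s then lam 0 else 0) - (if j ∈ s then lam j else 0) := by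
  rw [← coordLin_apply, map_sum]
  simp [coordX_negE, mul_sub, sum_sub_distrib]

lemma mem_sigmaCone_iff {I : Finset (Fin (n + 1))} (hI : I ≠ univ) {x : Fin n → ℝ} :
    x ∈ sigmaCone n I ↔ ∀ j ∉ I, coordX x j = tropF x := by
  constructor
  · rintro ⟨lam, hlam, rfl⟩
    set c := if 0 ∈ I then lam 0 else 0
    have hout : ∀ j ∉ I, coordX (∑ i ∈ I, lam i • negE n i) j = c := by
      intro j hj
      simp [coordX_sum_smul_negE, hj, c]
    obtain ⟨j₀, -, hj₀⟩ := exists_of_ssubset (ssubset_univ_iff.2 hI)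
    have htrop : tropF (∑ i ∈ I, lam i • negE n i) = c := by
      refine tropF_eq_of_forall_le (fun j => ?_) ⟨j₀, hout j₀ hj₀⟩
      rw [coordX_sum_smul_negE]
      exact sub_le_self _ (by split_ifs; exacts [hlam j, le_rfl])
    intro j hj
    rw [hout j hj, htrop]
  · intro h
    -- `x_j = λ_0 - λ_j` for `λ_i = f(x) - x_i`, and `λ` vanishes off `I`
    refine ⟨fun i => tropF x - coordX x i, fun i => sub_nonneg.2 (coordX_le_tropF x i), ?_⟩
    have hzero : ∀ i ∈ univ, i ∉ I → (tropF x - coordX x i) • negE n i = 0 := by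
      intro i _ hi
      simp [h i hi]
    rw [sum_subset (subset_univ I) hzero]
    exact eq_of_forall_coordX_eq fun j => by simp [coordX_sum_smul_negE]

end Cones

section Support

variable {n : ℕ}

noncomputable def maxIndices (x : Fin n → ℝ) : Finset (Fin (n + 1)) :=
  {j | coordX x j = tropF x}

@[simp]
lemma mem_maxIndices {x : Fin n → ℝ} {j : Fin (n + 1)} :
    j ∈ maxIndices x ↔ coordX x j = tropF x := by
  simp [maxIndices]

lemma maxIndices_nonempty (x : Fin n → ℝ) : (maxIndices x).Nonempty :=
  let ⟨j, hj⟩ := exists_coordX_eq_tropF x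
  ⟨j, mem_maxIndices.2 hj⟩

lemma ncard_setOf_coordX_eq_tropF (x : Fin n → ℝ) :
    {j | coordX x j = tropF x}.ncard = #(maxIndices x) := by
  rw [← Set.ncard_coe_finset]
  simp [maxIndices]

lemma mem_suppL_iff (k : ℕ) (x : Fin n → ℝ) : x ∈ suppL n k ↔ n + 1 - k ≤ #(maxIndices x) := by
  simp only [suppL, Set.mem_iUnion, Set.mem_ofPred_eq, exists_prop]
  constructor
  · rintro ⟨I, ⟨hI, hcard⟩, hx⟩
    have hsub : Iᶜ ⊆ maxIndices x := fun j hj =>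
      mem_maxIndices.2 ((mem_sigmaCone_iff hI).1 hx j (mem_compl.1 hj))
    have := card_le_card hsub
    rw [card_compl, Fintype.card_fin] at this
    omega
  · intro h
    have hI : (maxIndices x)ᶜ ≠ univ := (compl_ne_univ_iff_nonempty _).2 (maxIndices_nonempty x)
    refine ⟨_, ⟨hI, ?_⟩, (mem_sigmaCone_iff hI).2 fun j hj => by simpa using hj⟩
    rw [card_compl, Fintype.card_fin]
    omega

end Support

lemma exists_isOpen_forall_eq_iff {X Y F : Type*} [TopologicalSpace X] [FunLike F X Y]
    (f : X → Y) (x : X) :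
    (∃ (U : Set X) (g : F), IsOpen U ∧ x ∈ U ∧ ∀ y ∈ U, f y = g y) ↔ ∃ g : F, f =ᶠ[𝓝 x] g := by
  simp only [EventuallyEq, eventually_nhds_iff]
  rw [exists_comm]
  exact exists_congr fun g => ⟨fun ⟨U, hU, hx, h⟩ => ⟨U, h, hU, hx⟩, fun ⟨U, h, hU, hx⟩ => ⟨U, hU, hx, h⟩⟩

lemma Finset.eventually_sup'_eq {ι X α : Type*} [TopologicalSpace X] [LinearOrder α]
    [TopologicalSpace α] [OrderClosedTopology α] {s : Finset ι} (hs : s.Nonempty)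
    {f : ι → X → α} {j : ι} (hj : j ∈ s) {x : X} (hf : ∀ i ∈ s, ContinuousAt (f i) x)
    (hx : ∀ i ∈ s, i ≠ j → f i x < f j x) :
    ∀ᶠ y in 𝓝 x, s.sup' hs (fun i => f i y) = f j y := by
  have hlt : ∀ᶠ y in 𝓝 x, ∀ i ∈ s, i ≠ j → f i y < f j y := by
    refine (eventually_all_finset s).2 fun i hi => ?_
    rcases eq_or_ne i j with rfl | hij
    · exact Eventually.of_forall fun _ h => absurd rfl h
    · exact ((hf i hi).eventually_lt (hf j hj) (hx i hi hij)).mono fun _ h _ => h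
  filter_upwards [hlt] with y hy
  refine le_antisymm (sup'_le _ _ fun i hi => ?_) (le_sup' (fun i => f i y) hj)
  rcases eq_or_ne i j with rfl | hij
  exacts [le_rfl, (hy i hi hij).le]

section AffineSupport

variable {E : Type*} [AddCommGroup E] [Module ℝ E] [TopologicalSpace E] [ContinuousSMul ℝ E]

lemma LinearMap.eq_zero_of_eventually_nonneg {ℓ : E →ₗ[ℝ] ℝ} (h : ∀ᶠ w in 𝓝 0, 0 ≤ ℓ w) :
    ℓ = 0 := by
  ext v
  have hv : Tendsto (fun t : ℝ => t • v) (𝓝 0) (𝓝 0) := by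
    simpa using (tendsto_id (x := 𝓝 (0 : ℝ))).smul_const v
  have hmin : IsLocalMin (fun t : ℝ => t * ℓ v) 0 := by
    filter_upwards [hv.eventually h] with t ht
    simpa using ht
  simpa using hmin.hasDerivAt_eq_zero (hasDerivAt_mul_const (ℓ v))

lemma AffineMap.linear_eq_of_eventually_le_of_eq [ContinuousAdd E] {a g : E →ᵃ[ℝ] ℝ} {x : E}
    (hle : ∀ᶠ y in 𝓝 x, a y ≤ g y) (hx : a x = g x) : a.linear = g.linear := by
  have hvadd : Tendsto (fun w : E => w +ᵥ x) (𝓝 0) (𝓝 x) := by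
    simpa using (continuous_add_const x).tendsto 0
  refine (sub_eq_zero.1 (LinearMap.eq_zero_of_eventually_nonneg ?_)).symm
  filter_upwards [hvadd.eventually hle] with w hw
  rw [AffineMap.map_vadd, AffineMap.map_vadd, hx] at hw
  simpa using hw

end AffineSupport

theorem exists_affineMap_eventuallyEq_tropF_iff {n : ℕ} (x : Fin n → ℝ) :
    (∃ g : (Fin n → ℝ) →ᵃ[ℝ] ℝ, tropF =ᶠ[𝓝 x] g) ↔ #(maxIndices x) ≤ 1 := by
  rw [card_le_one]
  constructor
  · rintro ⟨g, hg⟩ j hj k hk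
    have hlin : ∀ i ∈ maxIndices x, coordLin n i = g.linear := fun i hi =>
      (coordLin n i).toAffineMap.linear_eq_of_eventually_le_of_eq
        (hg.mono fun y hy => hy ▸ coordX_le_tropF y i) ((mem_maxIndices.1 hi).trans hg.eq_of_nhds)
    exact coordLin_injective ((hlin j hj).trans (hlin k hk).symm)
  · intro h
    obtain ⟨j, hj⟩ := maxIndices_nonempty x
    refine ⟨(coordLin n j).toAffineMap, univ.eventually_sup'_eq univ_nonempty (mem_univ j)
      (fun i _ => (coordLin n i).continuous_of_finiteDimensional.continuousAt) fun i _ hij => ?_⟩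
    exact ((coordX_le_tropF x i).lt_of_ne fun hi => hij (h i (mem_maxIndices.2 hi) j hj)).trans_eq
      (mem_maxIndices.1 hj).symm

/-- For `n ≥ 1` and `x ∈ ℝ^n`, the function
`f(x) = max(0, x_1, …, x_n)` fails to be locally affine at `x` iff at least two
indices `j ∈ {0,1,…,n}` satisfy `x_j = f(x)`. Equivalently, the non-locally-affine
locus of `f` is exactly `|L^n_{n-1}|`. -/
theorem tropF_not_locally_affine_iff (n : ℕ) (hn : 1 ≤ n) :
    (∀ x : Fin n → ℝ,
      (¬ ∃ (U : Set (Fin n → ℝ)) (g : (Fin n → ℝ) →ᵃ[ℝ] ℝ),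
          IsOpen U ∧ x ∈ U ∧ ∀ y ∈ U, tropF y = g y) ↔
        2 ≤ { j : Fin (n + 1) | coordX x j = tropF x }.ncard) ∧
    { x : Fin n → ℝ |
      ¬ ∃ (U : Set (Fin n → ℝ)) (g : (Fin n → ℝ) →ᵃ[ℝ] ℝ),
          IsOpen U ∧ x ∈ U ∧ ∀ y ∈ U, tropF y = g y } = suppL n (n - 1) := by
  refine ⟨fun x => ?_, Set.ext fun x => ?_⟩
  · rw [exists_isOpen_forall_eq_iff, exists_affineMap_eventuallyEq_tropF_iff,
      ncard_setOf_coordX_eq_tropF]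
    omega
  · rw [Set.mem_ofPred_eq, exists_isOpen_forall_eq_iff, exists_affineMap_eventuallyEq_tropF_iff,
      mem_suppL_iff]
    omega
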